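/- arXiv:2603.12528 — 7 statements merged into one kernel-verified Lean document; each statement's English description precedes it below -/
import Mathlib

section
/- The minimum, over all feasible subfamilies ℋ ⊆ 𝒟, of the total weight ∑_{t ∈ ℋ} w_t equals the minimum, over all integer-feasible vectors (x_H)_{H ⊆ 𝒢}, of ∑_{H ⊆ 𝒢} f_H(x_H) (both understood as infima in [0, ∞], so in particular one side is finite if and only if the other is). -/
open scoped BigOperators ENNReal

/-- The sum of the `k` smallest elements of a multiset of reals. -/
noncomputable def sumSmallest (s : Multiset ℝ) (k : ℕ) : ℝ :=
  ((s.sort (· ≤ ·)).take k).sum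

/-- The bucket `B(H)`: all sets in the family whose assigned subset of items equals `H`. -/
noncomputable def bucket {G D : Type*} [Fintype D] [DecidableEq G]
    (sets : D → Finset G) (H : Finset G) : Finset D :=
  Finset.univ.filter (fun t => sets t = H)

/-- `fH sets w H k` is the sum of the `k` smallest weights among the sets in bucket `B(H)`. -/
noncomputable def fH {G D : Type*} [Fintype D] [DecidableEq G]
    (sets : D → Finset G) (w : D → ℝ) (H : Finset G) (k : ℕ) : ℝ :=
  sumSmallest ((bucket sets H).val.map w) k

/-- The piecewise-linear extension of `f : ℕ → ℝ`:
`plExt f x = f z + (f (z+1) - f z) * (x - z)` for `z ≤ x ≤ z + 1`, `z = ⌊x⌋`. -/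
noncomputable def plExt (f : ℕ → ℝ) (x : ℝ) : ℝ :=
  f ⌊x⌋₊ + (f (⌊x⌋₊ + 1) - f ⌊x⌋₊) * (x - (⌊x⌋₊ : ℝ))

/-- An integer vector `(x_H)_{H ⊆ 𝒢}` is integer-feasible if `0 ≤ x H ≤ |B(H)|` for all `H`
and `∑_{H ∋ g} x H ≥ Q g` for all items `g`. -/
def IntFeasible {G D : Type*} [Fintype G] [Fintype D] [DecidableEq G]
    (sets : D → Finset G) (Q : G → ℕ) (x : Finset G → ℕ) : Prop :=
  (∀ H : Finset G, x H ≤ (bucket sets H).card) ∧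
  (∀ g : G, Q g ≤ ∑ H ∈ Finset.univ.filter (fun H : Finset G => g ∈ H), x H)

/-- A real vector `(x_H)_{H ⊆ 𝒢}` is fractionally feasible if `0 ≤ x H ≤ |B(H)|` for all `H`
and `∑_{H ∋ g} x H ≥ Q g` for all items `g`. -/
def FracFeasible {G D : Type*} [Fintype G] [Fintype D] [DecidableEq G]
    (sets : D → Finset G) (Q : G → ℕ) (x : Finset G → ℝ) : Prop :=
  (∀ H : Finset G, 0 ≤ x H ∧ x H ≤ ((bucket sets H).card : ℝ)) ∧
  (∀ g : G, (Q g : ℝ) ≤ ∑ H ∈ Finset.univ.filter (fun H : Finset G => g ∈ H), x H)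

lemma take_sum_orderedInsert_le (a : ℝ) :
    ∀ (l : List ℝ), l.Pairwise (· ≤ ·) → ∀ k, k ≤ l.length →
      ((l.orderedInsert (· ≤ ·) a).take k).sum ≤ (l.take k).sum := by
  intro l
  induction l with
  | nil =>
    intro _ k hk
    simp at hk
    simp [hk]
  | cons b l ih =>
    intro hs k hk
    match k with
    | 0 => simp
    | (j+1) =>
      by_cases hab : a ≤ b
      · rw [List.orderedInsert_cons_of_le (h := hab), List.take_succ_cons, List.sum_cons]
        have hj : j < (b :: l).length := hk
        rw [List.take_succ, List.getElem?_eq_getElem hj]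
        simp only [Option.toList_some, List.sum_append, List.sum_cons, List.sum_nil, add_zero]
        have hmem : (b :: l)[j] ∈ b :: l := List.getElem_mem hj
        have hble : a ≤ (b :: l)[j] := by
          rcases List.mem_cons.mp hmem with h | h
          · rw [h]; exact hab
          · exact le_trans hab ((List.pairwise_cons.mp hs).1 _ h)
        linarith
      · show ((if a ≤ b then a :: b :: l else b :: l.orderedInsert (· ≤ ·) a).take (j+1)).sum ≤ _
        rw [if_neg hab, List.take_succ_cons, List.take_succ_cons, List.sum_cons, List.sum_cons]
        have := ih (List.pairwise_cons.mp hs).2 j (by simpa using hk)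
        linarith

lemma List.eq_of_perm_of_sorted {α : Type*} {r : α → α → Prop} [Std.Antisymm r]
    {l₁ l₂ : List α} (hp : l₁.Perm l₂) (hs₁ : l₁.Pairwise r) (hs₂ : l₂.Pairwise r) : l₁ = l₂ :=
  hp.eq_of_pairwise' hs₁ hs₂

lemma sort_cons_eq (a : ℝ) (s : Multiset ℝ) :
    (a ::ₘ s).sort (· ≤ ·) = (s.sort (· ≤ ·)).orderedInsert (· ≤ ·) a := by
  apply List.eq_of_perm_of_sorted (r := (· ≤ ·))
  · rw [← Multiset.coe_eq_coe]
    rw [Multiset.sort_eq]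
    have : ((s.sort (· ≤ ·)).orderedInsert (· ≤ ·) a : Multiset ℝ)
        = ↑(a :: s.sort (· ≤ ·)) := Multiset.coe_eq_coe.mpr (List.perm_orderedInsert _ _ _)
    rw [this, ← Multiset.cons_coe, Multiset.sort_eq]
  · exact Multiset.pairwise_sort _ _
  · exact (Multiset.pairwise_sort _ _).orderedInsert a _

lemma sumSmallest_cons_le (a : ℝ) (s : Multiset ℝ) (k : ℕ) (hk : k ≤ Multiset.card s) :
    sumSmallest (a ::ₘ s) k ≤ sumSmallest s k := by
  unfold sumSmallest
  rw [sort_cons_eq]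
  exact take_sum_orderedInsert_le a _ (Multiset.pairwise_sort _ _) k
    (by rwa [Multiset.length_sort])

lemma sumSmallest_le_of_le {t s : Multiset ℝ} (h : t ≤ s) (k : ℕ) (hk : k ≤ Multiset.card t) :
    sumSmallest s k ≤ sumSmallest t k := by
  obtain ⟨u, rfl⟩ := Multiset.le_iff_exists_add.mp h
  induction u using Multiset.induction_on with
  | empty => simp
  | cons a u ih =>
    calc sumSmallest (t + a ::ₘ u) k = sumSmallest (a ::ₘ (t + u)) k := by
          congr 1
          rw [Multiset.add_cons]
      _ ≤ sumSmallest (t + u) k := sumSmallest_cons_le _ _ _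
          (le_trans hk (by simp))
      _ ≤ sumSmallest t k := ih (Multiset.le_add_right _ _)

lemma sumSmallest_card (t : Multiset ℝ) : sumSmallest t (Multiset.card t) = t.sum := by
  unfold sumSmallest
  rw [List.take_of_length_le (by rw [Multiset.length_sort])]
  conv_rhs => rw [← Multiset.sort_eq t (· ≤ ·)]
  exact (Multiset.sum_coe _).symm

lemma subset_sum_le {D : Type*} [DecidableEq D] (w : D → ℝ) {S B : Finset D} (h : S ⊆ B) :
    sumSmallest (B.val.map w) S.card ≤ ∑ t ∈ S, w t := by
  have hle : S.val.map w ≤ B.val.map w := Multiset.map_le_map (Finset.val_le_iff.mpr h)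
  calc sumSmallest (B.val.map w) S.card
      ≤ sumSmallest (S.val.map w) S.card := sumSmallest_le_of_le hle _ (by simp)
    _ = (S.val.map w).sum := by
        have := sumSmallest_card (S.val.map w)
        simpa using this
    _ = ∑ t ∈ S, w t := rfl

lemma exists_subset_sum_eq {D : Type*} [DecidableEq D] (w : D → ℝ) (B : Finset D) (k : ℕ)
    (hk : k ≤ B.card) :
    ∃ S : Finset D, S ⊆ B ∧ S.card = k ∧ ∑ t ∈ S, w t = sumSmallest (B.val.map w) k := by
  classical
  set r : D → D → Prop := fun a b => w a ≤ w b with hr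
  haveI : DecidableRel r := fun a b => Real.decidableLE _ _
  haveI : Std.Total r := ⟨fun a b => le_total (w a) (w b)⟩
  haveI : IsTrans D r := ⟨fun a b c hab hbc => le_trans hab hbc⟩
  set L := B.toList.insertionSort r with hLdef
  have hperm : List.Perm L B.toList := List.perm_insertionSort r _
  have hnodupL : L.Nodup := hperm.nodup_iff.mpr B.nodup_toList
  have hlen : L.length = B.card := by rw [hperm.length_eq, Finset.length_toList]
  have hnd : (L.take k).Nodup := (List.take_sublist _ _).nodup hnodupL
  have hcoeL : (L : Multiset D) = B.val := by
    rw [Multiset.coe_eq_coe.mpr hperm]; exact Finset.coe_toList B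
  refine ⟨⟨↑(L.take k), hnd⟩, ?_, ?_, ?_⟩
  · intro t ht
    have : t ∈ L.take k := by simpa using Finset.mem_mk.mp ht
    have : t ∈ L := List.mem_of_mem_take this
    have : t ∈ B.toList := hperm.mem_iff.mp this
    simpa [Finset.mem_toList] using this
  · show (L.take k).length = k
    simp only [Finset.card_mk, Multiset.coe_card, List.length_take, hlen]
    exact min_eq_left hk
  · have hsorted : (L.map w).Pairwise (· ≤ ·) := by
      have hs : L.Pairwise r := List.pairwise_insertionSort r _
      exact List.Pairwise.map _ (fun a b h => h) hs
    have hL : (B.val.map w).sort (· ≤ ·) = L.map w := by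
      apply List.eq_of_perm_of_sorted (r := (· ≤ ·)) _ (Multiset.pairwise_sort _ _) hsorted
      rw [← Multiset.coe_eq_coe, Multiset.sort_eq, ← Multiset.map_coe, hcoeL]
    show ((Multiset.map w ↑(L.take k))).sum = _
    unfold sumSmallest
    rw [hL, ← List.map_take, Multiset.map_coe, Multiset.sum_coe]

/-- The minimum total weight over feasible subfamilies `ℋ ⊆ 𝒟` equals the minimum of
`∑_H f_H(x_H)` over integer-feasible vectors, both as infima in `[0,∞]`. -/
theorem min_cover_eq_min_bucketed {G D : Type*} [Fintype G] [DecidableEq G]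
    [Fintype D] [DecidableEq D]
    (sets : D → Finset G) (w : D → ℝ) (hw : ∀ t, 0 ≤ w t) (Q : G → ℕ) :
    sInf {v : ℝ≥0∞ | ∃ ℋ : Finset D,
        (∀ g : G, Q g ≤ (ℋ.filter (fun t => g ∈ sets t)).card) ∧
        v = ENNReal.ofReal (∑ t ∈ ℋ, w t)} =
    sInf {v : ℝ≥0∞ | ∃ x : Finset G → ℕ, IntFeasible sets Q x ∧
        v = ENNReal.ofReal (∑ H : Finset G, fH sets w H (x H))} := by
  classical
  apply le_antisymm
  · -- LHS ≤ RHS: every value of RHS-set is attained by a cover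
    apply sInf_le_sInf
    rintro v ⟨x, ⟨hx1, hx2⟩, rfl⟩
    choose S hS1 hS2 hS3 using fun H => exists_subset_sum_eq w (bucket sets H) (x H) (hx1 H)
    have hset : ∀ H, ∀ t ∈ S H, sets t = H := by
      intro H t ht
      have := hS1 H ht
      simpa [bucket] using this
    have hdisj : (↑(Finset.univ : Finset (Finset G)) : Set (Finset G)).PairwiseDisjoint S := by
      intro H1 _ H2 _ hne
      apply Finset.disjoint_left.mpr
      intro t ht1 ht2
      exact hne ((hset H1 t ht1) ▸ (hset H2 t ht2))
    refine ⟨Finset.univ.biUnion S, ?_, ?_⟩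
    · intro g
      have hEq : (Finset.univ.biUnion S).filter (fun t => g ∈ sets t)
          = (Finset.univ.filter (fun H : Finset G => g ∈ H)).biUnion S := by
        ext t
        simp only [Finset.mem_filter, Finset.mem_biUnion, Finset.mem_univ, true_and]
        constructor
        · rintro ⟨⟨H, hH⟩, hg⟩
          exact ⟨H, (hset H t hH) ▸ hg, hH⟩
        · rintro ⟨H, hgH, hH⟩
          exact ⟨⟨H, hH⟩, (hset H t hH).symm ▸ hgH⟩
      rw [hEq, Finset.card_biUnion (fun H1 h1 H2 h2 hne => hdisj (by simp) (by simp) hne)]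
      calc Q g ≤ ∑ H ∈ Finset.univ.filter (fun H : Finset G => g ∈ H), x H := hx2 g
        _ = _ := Finset.sum_congr rfl (fun H _ => (hS2 H).symm)
    · congr 1
      rw [Finset.sum_biUnion hdisj]
      exact (Finset.sum_congr rfl (fun H _ => hS3 H)).symm
  · -- RHS ≤ LHS
    apply le_sInf
    rintro v ⟨ℋ, hfeas, rfl⟩
    set x : Finset G → ℕ := fun H => (ℋ.filter (fun t => sets t = H)).card with hxdef
    have hsub : ∀ H, ℋ.filter (fun t => sets t = H) ⊆ bucket sets H := by
      intro H t ht
      simp only [bucket, Finset.mem_filter, Finset.mem_univ, true_and]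
      exact (Finset.mem_filter.mp ht).2
    have hx1 : ∀ H, x H ≤ (bucket sets H).card := fun H => Finset.card_le_card (hsub H)
    have hx2 : ∀ g, Q g ≤ ∑ H ∈ Finset.univ.filter (fun H : Finset G => g ∈ H), x H := by
      intro g
      have hcard := Finset.card_eq_sum_card_fiberwise
        (f := sets) (s := ℋ.filter (fun t => g ∈ sets t))
        (t := Finset.univ.filter (fun H : Finset G => g ∈ H))
        (fun t ht => by
          simp only [Finset.mem_coe, Finset.mem_filter, Finset.mem_univ, true_and]
          exact (Finset.mem_filter.mp ht).2)
      refine le_trans (hfeas g) ?_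
      rw [hcard]
      refine Finset.sum_le_sum (fun H _ => Finset.card_le_card ?_)
      intro t ht
      simp only [Finset.mem_filter] at ht ⊢
      exact ⟨ht.1.1, ht.2⟩
    refine le_trans (sInf_le ⟨x, ⟨hx1, hx2⟩, rfl⟩) (ENNReal.ofReal_le_ofReal ?_)
    have hsplit : ∑ t ∈ ℋ, w t
        = ∑ H : Finset G, ∑ t ∈ ℋ.filter (fun t => sets t = H), w t :=
      (Finset.sum_fiberwise_of_maps_to (fun t _ => Finset.mem_univ (sets t)) w).symm
    rw [hsplit]
    exact Finset.sum_le_sum (fun H _ => subset_sum_le w (hsub H))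
end

section
/- Let 0 ≤ w_1 ≤ w_2 ≤ … ≤ w_m be nonnegative reals with partial sums f(k) = w_1 + … + w_k and piecewise-linear extension f̂ : [0, m] → ℝ. Then: (a) for every x ∈ [0,1]^m, ∑_{i=1}^m w_i x_i ≥ f̂(∑_{i=1}^m x_i); and (b) for every real s ∈ [0, m] there exists x ∈ [0,1]^m with ∑_{i=1}^m x_i = s and ∑_{i=1}^m w_i x_i = f̂(s). -/
open scoped BigOperators

/-- For nonnegative nondecreasing weights `w 0 ≤ … ≤ w (m-1)` with partial sums
`f k = ∑_{i<k} w i` and piecewise-linear extension `f̂ = plExt f`: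
(a) for every `x ∈ [0,1]^m`, `∑ w i * x i ≥ f̂ (∑ x i)`, and
(b) for every `s ∈ [0, m]` there is `x ∈ [0,1]^m` with `∑ x i = s` and
`∑ w i * x i = f̂ s`. -/
theorem weighted_mass_min_eq_plExt (m : ℕ) (w : ℕ → ℝ)
    (h0 : ∀ i < m, 0 ≤ w i)
    (hmono : ∀ i j, i ≤ j → j < m → w i ≤ w j) :
    (∀ x : ℕ → ℝ, (∀ i < m, x i ∈ Set.Icc (0 : ℝ) 1) →
      plExt (fun k => ∑ i ∈ Finset.range k, w i) (∑ i ∈ Finset.range m, x i) ≤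
        ∑ i ∈ Finset.range m, w i * x i) ∧
    (∀ s : ℝ, s ∈ Set.Icc (0 : ℝ) (m : ℝ) →
      ∃ x : ℕ → ℝ, (∀ i < m, x i ∈ Set.Icc (0 : ℝ) 1) ∧
        (∑ i ∈ Finset.range m, x i) = s ∧
        (∑ i ∈ Finset.range m, w i * x i) =
          plExt (fun k => ∑ i ∈ Finset.range k, w i) s) := by
  have fstep : ∀ z : ℕ, (∑ i ∈ Finset.range (z+1), w i) - ∑ i ∈ Finset.range z, w i = w z := by
    intro z; rw [Finset.sum_range_succ]; ring
  constructor
  · intro x hx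
    set S := ∑ i ∈ Finset.range m, x i with hS
    have hS0 : 0 ≤ S := Finset.sum_nonneg fun i hi => (hx i (Finset.mem_range.mp hi)).1
    have hSm : S ≤ m := by
      calc S ≤ ∑ i ∈ Finset.range m, (1:ℝ) :=
            Finset.sum_le_sum fun i hi => (hx i (Finset.mem_range.mp hi)).2
        _ = m := by simp
    set z := ⌊S⌋₊ with hzdef
    have hzS : (z:ℝ) ≤ S := Nat.floor_le hS0
    have hSz1 : S < z + 1 := Nat.lt_floor_add_one S
    have hzm : z ≤ m := by
      have := Nat.floor_le_floor (R := ℝ) hSm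
      simpa using this
    rcases eq_or_lt_of_le hzm with hzm | hzm
    · -- z = m, so S = m and every x i = 1
      have hmS : (m:ℝ) ≤ S := hzm ▸ hzS
      have hSm' : S = m := le_antisymm hSm hmS
      have hall : ∀ i ∈ Finset.range m, x i = 1 := by
        have hsum0 : ∑ i ∈ Finset.range m, (1 - x i) = 0 := by
          rw [Finset.sum_sub_distrib]; simp [← hS, hSm']
        intro i hi
        have := (Finset.sum_eq_zero_iff_of_nonneg fun j hj =>
          sub_nonneg.mpr (hx j (Finset.mem_range.mp hj)).2).mp hsum0 i hi
        linarith
      have h1 : ∑ i ∈ Finset.range m, w i * x i = ∑ i ∈ Finset.range m, w i :=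
        Finset.sum_congr rfl fun i hi => by rw [hall i hi, mul_one]
      have h2 : plExt (fun k => ∑ i ∈ Finset.range k, w i) S
          = ∑ i ∈ Finset.range m, w i := by
        simp only [plExt, ← hzdef]
        have hz0 : S - (z:ℝ) = 0 := by rw [hSm', hzm]; simp
        rw [hz0, mul_zero, add_zero, hzm]
      rw [h1, h2]
    · -- z < m
      have key : ∀ i ∈ Finset.range m,
          (if i < z then w i + w z * (x i - 1) else w z * x i) ≤ w i * x i := by
        intro i hi
        have him := Finset.mem_range.mp hi
        by_cases h : i < z
        · simp only [h, if_pos]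
          have hw : w i ≤ w z := hmono i z h.le hzm
          have hx1 : x i ≤ 1 := (hx i him).2
          nlinarith
        · simp only [h, if_neg, not_false_iff]
          have hw : w z ≤ w i := hmono z i (not_lt.mp h) him
          have hx0 : 0 ≤ x i := (hx i him).1
          nlinarith
      have hsum : ∑ i ∈ Finset.range m,
          (if i < z then w i + w z * (x i - 1) else w z * x i)
          = (∑ i ∈ Finset.range z, w i) + w z * (S - z) := by
        rw [Finset.range_eq_Ico, ← Finset.sum_Ico_consecutive _ (Nat.zero_le z) hzm.le]
        rw [Finset.sum_congr rfl (fun i hi => if_pos (Finset.mem_Ico.mp hi).2),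
            Finset.sum_congr (rfl : Finset.Ico z m = Finset.Ico z m)
              (fun i hi => if_neg (not_lt.mpr (Finset.mem_Ico.mp hi).1))]
        have hSsplit : S = (∑ i ∈ Finset.Ico 0 z, x i) + ∑ i ∈ Finset.Ico z m, x i := by
          rw [hS, Finset.range_eq_Ico, ← Finset.sum_Ico_consecutive _ (Nat.zero_le z) hzm.le]
        rw [Finset.sum_add_distrib, ← Finset.mul_sum, ← Finset.mul_sum,
            Finset.sum_sub_distrib, hSsplit]
        have hcard : ∑ _i ∈ Finset.Ico 0 z, (1:ℝ) = z := by simp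
        rw [hcard]
        rw [Finset.range_eq_Ico]; ring
      calc plExt (fun k => ∑ i ∈ Finset.range k, w i) S
          = (∑ i ∈ Finset.range z, w i) + w z * (S - z) := by
            simp only [plExt, ← hzdef]; rw [fstep z]
        _ = ∑ i ∈ Finset.range m, (if i < z then w i + w z * (x i - 1) else w z * x i) :=
            hsum.symm
        _ ≤ ∑ i ∈ Finset.range m, w i * x i := Finset.sum_le_sum key
  · intro s hs
    obtain ⟨hs0, hsm⟩ := hs
    set z := ⌊s⌋₊ with hzdef
    have hzs : (z:ℝ) ≤ s := Nat.floor_le hs0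
    have hsz1 : s < z + 1 := Nat.lt_floor_add_one s
    have hzm : z ≤ m := by
      have := Nat.floor_le_floor (R := ℝ) hsm
      simpa using this
    refine ⟨fun i => if i < z then 1 else if i = z then s - z else 0, ?_, ?_, ?_⟩
    · intro i him
      by_cases h : i < z
      · simp [h]
      · by_cases h' : i = z
        · simp only [Set.mem_Icc]
          rw [if_neg h, if_pos h']
          exact ⟨by linarith, by linarith⟩
        · simp [h, h']
    · rcases eq_or_lt_of_le hzm with hzm | hzm
      · have hms : (m:ℝ) ≤ s := hzm ▸ hzs
        have hsm' : s = m := le_antisymm hsm hms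
        have hc : ∀ i ∈ Finset.range m, (if i < z then (1:ℝ) else if i = z then s - z else 0) = 1 := by
          intro i hi
          have : i < z := hzm ▸ Finset.mem_range.mp hi
          simp [this]
        rw [Finset.sum_congr rfl hc]
        simp [hsm']
      · have hss : ∀ i ∈ Finset.range m, i ∉ Finset.range (z+1) →
            (if i < z then (1:ℝ) else if i = z then s - z else 0) = 0 := by
          intro i _ hi
          simp only [Finset.mem_range, not_lt] at hi
          have h1 : ¬ i < z := by omega
          have h2 : i ≠ z := by omega
          simp [h1, h2]
        rw [← Finset.sum_subset (Finset.range_subset_range.mpr hzm) hss]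
        rw [Finset.sum_range_succ]
        have hc : ∀ i ∈ Finset.range z, (if i < z then (1:ℝ) else if i = z then s - z else 0) = 1 := by
          intro i hi; simp [Finset.mem_range.mp hi]
        rw [Finset.sum_congr rfl hc]
        simp
    · rcases eq_or_lt_of_le hzm with hzm | hzm
      · have hms : (m:ℝ) ≤ s := hzm ▸ hzs
        have hsm' : s = m := le_antisymm hsm hms
        have hc : ∀ i ∈ Finset.range m,
            w i * (if i < z then (1:ℝ) else if i = z then s - z else 0) = w i := by
          intro i hi
          have : i < z := hzm ▸ Finset.mem_range.mp hi
          simp [this]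
        rw [Finset.sum_congr rfl hc]
        simp only [plExt, ← hzdef]
        have hz0 : s - (z:ℝ) = 0 := by rw [hsm', hzm]; simp
        rw [hz0, mul_zero, add_zero, hzm]
      · have hss : ∀ i ∈ Finset.range m, i ∉ Finset.range (z+1) →
            w i * (if i < z then (1:ℝ) else if i = z then s - z else 0) = 0 := by
          intro i _ hi
          simp only [Finset.mem_range, not_lt] at hi
          have h1 : ¬ i < z := by omega
          have h2 : i ≠ z := by omega
          simp [h1, h2]
        rw [← Finset.sum_subset (Finset.range_subset_range.mpr hzm) hss]
        rw [Finset.sum_range_succ]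
        have hc : ∀ i ∈ Finset.range z,
            w i * (if i < z then (1:ℝ) else if i = z then s - z else 0) = w i := by
          intro i hi; simp [Finset.mem_range.mp hi]
        rw [Finset.sum_congr rfl hc]
        simp only [plExt, ← hzdef]
        rw [fstep z]
        simp
end

section
/- For each H ⊆ 𝒢 let w_{H,1} ≤ w_{H,2} ≤ … ≤ w_{H,|B(H)|} denote the weights of the sets in the bucket B(H) sorted in nondecreasing order. Then the infimum of ∑_{H ⊆ 𝒢} ∑_{i=1}^{|B(H)|} w_{H,i} · x_{H,i} over all collections (x_{H,i}) with x_{H,i} ∈ [0,1] for all H and i, and with ∑_{H ⊆ 𝒢, g ∈ H} ∑_{i=1}^{|B(H)|} x_{H,i} ≥ Q_g for every g ∈ 𝒢, equals the infimum of ∑_{H ⊆ 𝒢} f̂_H(x_H) over all fractionally feasible real vectors (x_H)_{H ⊆ 𝒢}. -/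
open scoped BigOperators ENNReal

section Aux
open Finset

noncomputable def cl01 (t : ℝ) : ℝ := min 1 (max 0 t)

lemma cl01_nonneg (t : ℝ) : 0 ≤ cl01 t := le_min one_pos.le (le_max_left 0 t)
lemma cl01_le_one (t : ℝ) : cl01 t ≤ 1 := min_le_left _ _
lemma cl01_of_one_le {t : ℝ} (h : 1 ≤ t) : cl01 t = 1 := by
  unfold cl01; rw [max_eq_right (by linarith), min_eq_left h]
lemma cl01_of_nonpos {t : ℝ} (h : t ≤ 0) : cl01 t = 0 := by
  unfold cl01; rw [max_eq_left h, min_eq_right zero_le_one]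
lemma cl01_of_mem {t : ℝ} (h0 : 0 ≤ t) (h1 : t ≤ 1) : cl01 t = t := by
  unfold cl01; rw [max_eq_right h0, min_eq_right h1]

lemma clampSumEq (n : ℕ) (t : ℝ) :
    ∑ i ∈ range n, cl01 (t - i) = min (n : ℝ) (max 0 t) := by
  induction n with
  | zero =>
    simp only [range_zero, sum_empty, Nat.cast_zero]
    rw [min_eq_left (le_max_left 0 t)]
  | succ n ih =>
    rw [Finset.sum_range_succ, ih]
    push_cast
    rcases le_or_gt t n with h | h
    · rw [cl01_of_nonpos (by linarith), add_zero]
      have hm : max 0 t ≤ (n : ℝ) := max_le (Nat.cast_nonneg n) h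
      rw [min_eq_right hm, min_eq_right (by linarith)]
    · have h0 : (0:ℝ) ≤ t := le_trans (Nat.cast_nonneg n) h.le
      rw [max_eq_right h0, min_eq_left h.le]
      rcases le_or_gt (t - n) 1 with h' | h'
      · rw [cl01_of_mem (by linarith) h', min_eq_right (by linarith)]; ring
      · rw [cl01_of_one_le (by linarith), min_eq_left (by linarith)]

lemma take_sum_eq (L : List ℝ) (k : ℕ) (h : k ≤ L.length) :
    (L.take k).sum = ∑ i ∈ range k, L.getD i 0 := by
  induction k with
  | zero => simp
  | succ k ih =>
    rw [Finset.sum_range_succ, ← ih (by omega),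
      List.sum_take_succ L k (by omega), List.getD_eq_getElem L 0 (by omega)]

lemma key_eq (L : List ℝ) (s : ℝ) (hs0 : 0 ≤ s) (hsn : s ≤ L.length) :
    ∑ i ∈ range L.length, L.getD i 0 * cl01 (s - i) = plExt (fun k => (L.take k).sum) s := by
  set n := L.length with hn
  set z := ⌊s⌋₊ with hzdef
  have hz : (z : ℝ) ≤ s := Nat.floor_le hs0
  have hz1 : s < z + 1 := Nat.lt_floor_add_one s
  rcases lt_or_ge z n with hzn | hzn
  · have hsplit := Finset.sum_range_add_sum_Ico (fun i => L.getD i 0 * cl01 (s - i))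
      (show z + 1 ≤ n from hzn)
    rw [← hsplit, Finset.sum_range_succ]
    have h2 : ∑ i ∈ Finset.Ico (z+1) n, L.getD i 0 * cl01 (s - i) = 0 := by
      apply Finset.sum_eq_zero
      intro i hi
      rw [Finset.mem_Ico] at hi
      have : s - i ≤ 0 := by
        have : (z : ℝ) + 1 ≤ i := by exact_mod_cast hi.1
        linarith
      rw [cl01_of_nonpos this, mul_zero]
    have h1 : ∑ i ∈ range z, L.getD i 0 * cl01 (s - i) = ∑ i ∈ range z, L.getD i 0 := by
      apply Finset.sum_congr rfl
      intro i hi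
      rw [Finset.mem_range] at hi
      have : (1 : ℝ) ≤ s - i := by
        have : (i : ℝ) + 1 ≤ z := by exact_mod_cast hi
        linarith
      rw [cl01_of_one_le this, mul_one]
    rw [h1, h2, cl01_of_mem (by linarith) (by linarith)]
    unfold plExt
    beta_reduce
    rw [← hzdef, take_sum_eq L z (by omega), take_sum_eq L (z+1) (by omega),
      Finset.sum_range_succ]
    ring
  · have hsn' : s = n := le_antisymm hsn (le_trans (by exact_mod_cast hzn) hz)
    have hzn2 : z = n := by
      have h1 : (z : ℝ) ≤ (n : ℝ) := hsn' ▸ hz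
      have := Nat.cast_le (α := ℝ) |>.mp h1
      omega
    have h1 : ∑ i ∈ range n, L.getD i 0 * cl01 (s - i) = ∑ i ∈ range n, L.getD i 0 := by
      apply Finset.sum_congr rfl
      intro i hi
      rw [Finset.mem_range] at hi
      have : (1 : ℝ) ≤ s - i := by
        have : (i : ℝ) + 1 ≤ n := by exact_mod_cast hi
        linarith
      rw [cl01_of_one_le this, mul_one]
    rw [h1]
    unfold plExt
    beta_reduce
    rw [← hzdef, hzn2, take_sum_eq L n le_rfl]
    have : s - (n : ℝ) = 0 := by rw [hsn']; ring
    rw [this, mul_zero, add_zero]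

lemma key_ge (L : List ℝ) (hL : L.Pairwise (· ≤ ·)) (h0 : ∀ a ∈ L, 0 ≤ a)
    (x : ℕ → ℝ) (hx : ∀ i < L.length, x i ∈ Set.Icc (0:ℝ) 1) :
    plExt (fun k => (L.take k).sum) (∑ i ∈ range L.length, x i) ≤
      ∑ i ∈ range L.length, L.getD i 0 * x i := by
  set n := L.length with hn
  set s := ∑ i ∈ range n, x i with hs
  have hs0 : 0 ≤ s := Finset.sum_nonneg fun i hi => (hx i (Finset.mem_range.mp hi)).1
  have hsn : s ≤ n := by
    calc s ≤ ∑ i ∈ range n, (1:ℝ) :=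
          Finset.sum_le_sum fun i hi => (hx i (Finset.mem_range.mp hi)).2
      _ = n := by simp
  rw [← key_eq L s hs0 hsn]
  set D : ℕ → ℝ := fun j => if j = 0 then L.getD 0 0 else L.getD j 0 - L.getD (j-1) 0 with hD
  have telescope : ∀ i : ℕ, ∑ j ∈ range (i+1), D j = L.getD i 0 := by
    intro i
    induction i with
    | zero => simp [hD]
    | succ i ih =>
      rw [Finset.sum_range_succ, ih]
      simp only [hD, Nat.succ_ne_zero, if_false, Nat.add_sub_cancel]
      ring
  have hDpos : ∀ j < n, 0 ≤ D j := by
    intro j hj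
    rcases Nat.eq_zero_or_pos j with rfl | hjp
    · simp only [hD, if_pos rfl]
      rw [List.getD_eq_getElem L 0 (by omega)]
      exact h0 _ (List.getElem_mem _)
    · have hj1 : j - 1 < j := by omega
      simp only [hD, Nat.pos_iff_ne_zero.mp hjp, if_false]
      rw [List.getD_eq_getElem L 0 (by omega), List.getD_eq_getElem L 0 (by omega)]
      have := hL.rel_get_of_lt (a := ⟨j-1, by omega⟩) (b := ⟨j, by omega⟩) (by exact hj1)
      simp only [List.get_eq_getElem] at this
      linarith
  have expand : ∀ y : ℕ → ℝ, ∑ i ∈ range n, L.getD i 0 * y i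
      = ∑ j ∈ range n, D j * ∑ i ∈ Finset.Ico j n, y i := by
    intro y
    calc ∑ i ∈ range n, L.getD i 0 * y i
        = ∑ i ∈ range n, ∑ j ∈ range (i+1), D j * y i := by
          refine Finset.sum_congr rfl fun i _ => ?_
          rw [← Finset.sum_mul, telescope i]
      _ = ∑ j ∈ range n, ∑ i ∈ Finset.Ico j n, D j * y i := by
          refine Finset.sum_comm' ?_
          intro i j
          simp only [Finset.mem_range, Finset.mem_Ico]
          omega
      _ = ∑ j ∈ range n, D j * ∑ i ∈ Finset.Ico j n, y i := by
          refine Finset.sum_congr rfl fun j _ => ?_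
          rw [Finset.mul_sum]
  rw [expand (fun i => cl01 (s - i)), expand x]
  apply Finset.sum_le_sum
  intro j hj
  rw [Finset.mem_range] at hj
  apply mul_le_mul_of_nonneg_left ?_ (hDpos j hj)
  have hL1 : ∑ i ∈ Finset.Ico j n, cl01 (s - i) = min ((n - j : ℕ) : ℝ) (max 0 (s - j)) := by
    rw [Finset.sum_Ico_eq_sum_range, ← clampSumEq (n - j) (s - j)]
    refine Finset.sum_congr rfl fun k _ => ?_
    congr 1
    push_cast
    ring
  rw [hL1]
  have hT0 : 0 ≤ ∑ i ∈ Finset.Ico j n, x i :=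
    Finset.sum_nonneg fun i hi => (hx i (Finset.mem_Ico.mp hi).2).1
  have hTj : s - j ≤ ∑ i ∈ Finset.Ico j n, x i := by
    have hsplit := Finset.sum_range_add_sum_Ico x (le_of_lt hj)
    have hhead : ∑ i ∈ range j, x i ≤ j := by
      calc ∑ i ∈ range j, x i ≤ ∑ i ∈ range j, (1:ℝ) :=
            Finset.sum_le_sum fun i hi => (hx i (by have := Finset.mem_range.mp hi; omega)).2
        _ = j := by simp
    rw [hs]
    linarith
  exact le_trans (min_le_right _ _) (max_le hT0 hTj)

open scoped BigOperators ENNReal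

lemma sortLen {G D : Type*} [Fintype D] [DecidableEq G]
    (sets : D → Finset G) (w : D → ℝ) (H : Finset G) :
    (((bucket sets H).val.map w).sort (· ≤ ·)).length = (bucket sets H).card := by
  rw [Multiset.length_sort, Multiset.card_map]
  rfl

lemma sortNonneg {G D : Type*} [Fintype D] [DecidableEq G]
    (sets : D → Finset G) (w : D → ℝ) (hw : ∀ t, 0 ≤ w t) (H : Finset G) :
    ∀ a ∈ (((bucket sets H).val.map w).sort (· ≤ ·)), 0 ≤ a := by
  intro a ha
  rw [Multiset.mem_sort, Multiset.mem_map] at ha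
  obtain ⟨t, _, rfl⟩ := ha
  exact hw t


/-- The infimum of the LP objective `∑_H ∑_i w_{H,i} x_{H,i}` over all `x_{H,i} ∈ [0,1]`
covering the demands equals the infimum of `∑_H f̂_H(x_H)` over fractionally feasible
vectors.  Here `w_{H,1} ≤ … ≤ w_{H,|B(H)|}` are the weights of bucket `B(H)` in
nondecreasing order. -/
theorem lp_inf_eq_frac_inf {G D : Type*} [Fintype G] [DecidableEq G] [Fintype D]
    (sets : D → Finset G) (w : D → ℝ) (hw : ∀ t, 0 ≤ w t) (Q : G → ℕ) :
    sInf {v : ℝ≥0∞ | ∃ x : Finset G → ℕ → ℝ,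
        (∀ H : Finset G, ∀ i < (bucket sets H).card, x H i ∈ Set.Icc (0 : ℝ) 1) ∧
        (∀ g : G, (Q g : ℝ) ≤ ∑ H ∈ Finset.univ.filter (fun H : Finset G => g ∈ H),
            ∑ i ∈ Finset.range (bucket sets H).card, x H i) ∧
        v = ENNReal.ofReal (∑ H : Finset G, ∑ i ∈ Finset.range (bucket sets H).card,
            (((bucket sets H).val.map w).sort (· ≤ ·)).getD i 0 * x H i)} =
    sInf {v : ℝ≥0∞ | ∃ x : Finset G → ℝ, FracFeasible sets Q x ∧
        v = ENNReal.ofReal (∑ H : Finset G, plExt (fH sets w H) (x H))} := by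

  classical
  apply le_antisymm
  · apply sInf_le_sInf
    rintro v ⟨y, ⟨hy1, hy2⟩, rfl⟩
    refine ⟨fun H i => cl01 (y H - i), fun H i _ => ⟨cl01_nonneg _, cl01_le_one _⟩, ?_, ?_⟩
    · intro g
      refine le_trans (hy2 g) (le_of_eq (Finset.sum_congr rfl fun H _ => ?_).symm)
      rw [clampSumEq, max_eq_right (hy1 H).1, min_eq_right (hy1 H).2]
    · congr 1
      refine Finset.sum_congr rfl fun H _ => ?_
      have hlen := sortLen sets w H
      have h := key_eq (((bucket sets H).val.map w).sort (· ≤ ·)) (y H) (hy1 H).1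
        (by rw [hlen]; exact (hy1 H).2)
      rw [hlen] at h
      exact h.symm
  · apply le_sInf
    rintro v ⟨x, hx1, hx2, rfl⟩
    have feas : FracFeasible sets Q (fun H => ∑ i ∈ range (bucket sets H).card, x H i) := by
      constructor
      · intro H
        constructor
        · exact Finset.sum_nonneg fun i hi => (hx1 H i (Finset.mem_range.mp hi)).1
        · calc ∑ i ∈ range (bucket sets H).card, x H i
              ≤ ∑ i ∈ range (bucket sets H).card, (1:ℝ) :=
                Finset.sum_le_sum fun i hi => (hx1 H i (Finset.mem_range.mp hi)).2
            _ = (bucket sets H).card := by simp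
      · exact hx2
    refine le_trans (sInf_le ⟨_, feas, rfl⟩) (ENNReal.ofReal_le_ofReal ?_)
    apply Finset.sum_le_sum
    intro H _
    have hlen := sortLen sets w H
    have h := key_ge (((bucket sets H).val.map w).sort (· ≤ ·))
      (Multiset.pairwise_sort _ _) (sortNonneg sets w hw H) (x H)
      (by rw [hlen]; exact hx1 H)
    rw [hlen] at h
    exact h

end Aux
end

section
/- Let 𝒢 be a finite set of items with demands Q_g ∈ ℕ. Suppose x̂ : {H : H ⊆ 𝒢} → ℝ satisfies x̂_H ≥ 0 for all H and ∑_{H ⊆ 𝒢, g ∈ H} x̂_H ≥ Q_g for every g ∈ 𝒢, and suppose opt : {H : H ⊆ 𝒢} → ℕ satisfies ∑_{H ⊆ 𝒢, g ∈ H} opt_H ≥ Q_g for every g ∈ 𝒢. Let x̄_H = ⌊x̂_H⌋, let r = ⌈ ∑_{H ⊆ 𝒢} (x̂_H − x̄_H) ⌉, and define e'_H = min( max(x̄_H, opt_H), x̄_H + r ) for every H ⊆ 𝒢. Then for every item g ∈ 𝒢 it holds that ∑_{H ⊆ 𝒢, g ∈ H} e'_H ≥ Q_g. -/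
open scoped BigOperators

/-- Feasibility of the rounded vector `e'` in the LP-rounding algorithm: if the fractional
vector `x̂` and the integer vector `opt` both cover the demands, then so does
`e'_H = min (max ⌊x̂_H⌋ opt_H) (⌊x̂_H⌋ + r)` where `r = ⌈∑_H (x̂_H - ⌊x̂_H⌋)⌉`. -/
theorem rounded_vector_covers {G : Type*} [Fintype G] [DecidableEq G] (Q : G → ℕ)
    (xhat : Finset G → ℝ) (hpos : ∀ H : Finset G, 0 ≤ xhat H)
    (hxcov : ∀ g : G,
      (Q g : ℝ) ≤ ∑ H ∈ Finset.univ.filter (fun H : Finset G => g ∈ H), xhat H)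
    (opt : Finset G → ℕ)
    (hoptcov : ∀ g : G,
      Q g ≤ ∑ H ∈ Finset.univ.filter (fun H : Finset G => g ∈ H), opt H)
    (r : ℕ) (hr : r = ⌈∑ H : Finset G, (xhat H - (⌊xhat H⌋₊ : ℝ))⌉₊)
    (e' : Finset G → ℕ)
    (he' : ∀ H : Finset G, e' H = min (max ⌊xhat H⌋₊ (opt H)) (⌊xhat H⌋₊ + r)) :
    ∀ g : G, Q g ≤ ∑ H ∈ Finset.univ.filter (fun H : Finset G => g ∈ H), e' H := by
  intro g
  set S := Finset.univ.filter (fun H : Finset G => g ∈ H) with hS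
  have hefl : ∀ H : Finset G, ⌊xhat H⌋₊ ≤ e' H := fun H => by
    rw [he' H]
    exact le_min (le_trans (le_max_left _ _) (le_refl _)) (Nat.le_add_right _ _)
  by_cases h : ∀ H ∈ S, opt H ≤ e' H
  · calc Q g ≤ ∑ H ∈ S, opt H := hoptcov g
      _ ≤ ∑ H ∈ S, e' H := Finset.sum_le_sum h
  · push_neg at h
    obtain ⟨H0, hH0S, hlt⟩ := h
    have he0 : e' H0 = ⌊xhat H0⌋₊ + r := by
      rw [he' H0] at hlt ⊢
      rcases min_choice (max ⌊xhat H0⌋₊ (opt H0)) (⌊xhat H0⌋₊ + r) with h1 | h1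
      · exfalso
        rw [h1] at hlt
        exact absurd (le_max_right _ _) (not_le.2 hlt)
      · exact h1
    have hfrac : ∑ H ∈ S, (xhat H - (⌊xhat H⌋₊ : ℝ)) ≤ (r : ℝ) := by
      rw [hr]
      calc ∑ H ∈ S, (xhat H - (⌊xhat H⌋₊ : ℝ))
          ≤ ∑ H : Finset G, (xhat H - (⌊xhat H⌋₊ : ℝ)) :=
            Finset.sum_le_sum_of_subset_of_nonneg (Finset.subset_univ S)
              (fun H _ _ => sub_nonneg.2 (Nat.floor_le (hpos H)))
        _ ≤ _ := Nat.le_ceil _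
    have hQ : Q g ≤ (∑ H ∈ S, ⌊xhat H⌋₊) + r := by
      have hreal : (Q g : ℝ) ≤ ((∑ H ∈ S, ⌊xhat H⌋₊ : ℕ) : ℝ) + (r : ℝ) := by
        have hsplit : ∑ H ∈ S, xhat H
            = ∑ H ∈ S, (⌊xhat H⌋₊ : ℝ) + ∑ H ∈ S, (xhat H - (⌊xhat H⌋₊ : ℝ)) := by
          rw [← Finset.sum_add_distrib]
          exact Finset.sum_congr rfl (fun H _ => by ring)
        have := hxcov g
        rw [← hS] at this
        push_cast
        calc (Q g : ℝ) ≤ ∑ H ∈ S, xhat H := this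
          _ = ∑ H ∈ S, (⌊xhat H⌋₊ : ℝ) + ∑ H ∈ S, (xhat H - (⌊xhat H⌋₊ : ℝ)) := hsplit
          _ ≤ ∑ H ∈ S, (⌊xhat H⌋₊ : ℝ) + r := by linarith
      exact_mod_cast hreal
    have hsum : (∑ H ∈ S, ⌊xhat H⌋₊) + r ≤ ∑ H ∈ S, e' H := by
      rw [← Finset.add_sum_erase S _ hH0S, ← Finset.add_sum_erase S e' hH0S, he0]
      have : ∑ H ∈ S.erase H0, ⌊xhat H⌋₊ ≤ ∑ H ∈ S.erase H0, e' H :=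
        Finset.sum_le_sum (fun H _ => hefl H)
      omega
    exact le_trans hQ hsum
end

section
/- Suppose (x̂_H)_{H ⊆ 𝒢} is a fractionally feasible real vector and (opt_H)_{H ⊆ 𝒢} is an integer-feasible vector such that ∑_{H ⊆ 𝒢} f̂_H(x̂_H) ≤ ∑_{H ⊆ 𝒢} f_H(opt_H). Then ∑_{H ⊆ 𝒢} f_H( max(⌊x̂_H⌋, opt_H) ) ≤ ∑_{H ⊆ 𝒢} f_H(⌊x̂_H⌋) + ∑_{H ⊆ 𝒢} f_H(opt_H) ≤ 2 · ∑_{H ⊆ 𝒢} f_H(opt_H). -/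
open scoped BigOperators ENNReal

lemma fH_nonneg {G D : Type*} [Fintype D] [DecidableEq G]
    (sets : D → Finset G) (w : D → ℝ) (hw : ∀ t, 0 ≤ w t) (H : Finset G) (k : ℕ) :
    0 ≤ fH sets w H k := by
  apply List.sum_nonneg
  intro a ha
  have ha' := List.mem_of_mem_take ha
  rw [Multiset.mem_sort] at ha'
  obtain ⟨t, _, rfl⟩ := Multiset.mem_map.mp ha'
  exact hw t

lemma fH_mono {G D : Type*} [Fintype D] [DecidableEq G]
    (sets : D → Finset G) (w : D → ℝ) (hw : ∀ t, 0 ≤ w t) (H : Finset G) :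
    Monotone (fH sets w H) := by
  apply monotone_nat_of_le_succ
  intro k
  unfold fH sumSmallest
  rw [List.take_succ, List.sum_append]
  have : 0 ≤ (((((bucket sets H).val.map w).sort (· ≤ ·))[k]?).toList).sum := by
    apply List.sum_nonneg
    intro a ha
    rw [Option.mem_toList] at ha
    have : a ∈ ((bucket sets H).val.map w).sort (· ≤ ·) := List.mem_of_getElem? ha
    rw [Multiset.mem_sort] at this
    obtain ⟨t, _, rfl⟩ := Multiset.mem_map.mp this
    exact hw t
  linarith

/-- If the fractional optimum is at most the integer optimum, then taking the pointwise
maximum of the rounded-down fractional solution and the integer optimum at most doubles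
the cost. -/
theorem max_floor_opt_le_two_opt {G D : Type*} [Fintype G] [DecidableEq G] [Fintype D]
    (sets : D → Finset G) (w : D → ℝ) (hw : ∀ t, 0 ≤ w t) (Q : G → ℕ)
    (xhat : Finset G → ℝ) (hfrac : FracFeasible sets Q xhat)
    (opt : Finset G → ℕ) (hopt : IntFeasible sets Q opt)
    (hle : ∑ H : Finset G, plExt (fH sets w H) (xhat H) ≤
        ∑ H : Finset G, fH sets w H (opt H)) :
    (∑ H : Finset G, fH sets w H (max ⌊xhat H⌋₊ (opt H)) ≤
      (∑ H : Finset G, fH sets w H ⌊xhat H⌋₊) + ∑ H : Finset G, fH sets w H (opt H)) ∧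
    ((∑ H : Finset G, fH sets w H ⌊xhat H⌋₊) + (∑ H : Finset G, fH sets w H (opt H)) ≤
      2 * ∑ H : Finset G, fH sets w H (opt H)) := by
  have hfl : ∀ H : Finset G, fH sets w H ⌊xhat H⌋₊ ≤ plExt (fH sets w H) (xhat H) := by
    intro H
    unfold plExt
    have h1 : fH sets w H ⌊xhat H⌋₊ ≤ fH sets w H (⌊xhat H⌋₊ + 1) :=
      fH_mono sets w hw H (Nat.le_succ _)
    have h2 : (⌊xhat H⌋₊ : ℝ) ≤ xhat H := Nat.floor_le (hfrac.1 H).1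
    nlinarith
  have h2 : ∑ H : Finset G, fH sets w H ⌊xhat H⌋₊ ≤ ∑ H : Finset G, fH sets w H (opt H) :=
    le_trans (Finset.sum_le_sum fun H _ => hfl H) hle
  constructor
  · rw [← Finset.sum_add_distrib]
    apply Finset.sum_le_sum
    intro H _
    rcases max_cases ⌊xhat H⌋₊ (opt H) with ⟨h, _⟩ | ⟨h, _⟩ <;> rw [h]
    · linarith [fH_nonneg sets w hw H (opt H)]
    · linarith [fH_nonneg sets w hw H ⌊xhat H⌋₊]
  · linarith
end

section
/- Suppose the instance admits an integer-feasible vector, let (opt_H)_{H ⊆ 𝒢} be an integer-feasible vector minimizing ∑_{H ⊆ 𝒢} f_H(opt_H), and let (x̂_H)_{H ⊆ 𝒢} be a fractionally feasible vector minimizing ∑_{H ⊆ 𝒢} f̂_H(x̂_H) over all fractionally feasible vectors. Set r = ⌈ ∑_{H ⊆ 𝒢} (x̂_H − ⌊x̂_H⌋) ⌉ and define e'_H = min( max(⌊x̂_H⌋, opt_H), ⌊x̂_H⌋ + r ) for every H ⊆ 𝒢. Then (e'_H)_{H ⊆ 𝒢} is integer-feasible, it satisfies ⌊x̂_H⌋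 ≤ e'_H ≤ ⌊x̂_H⌋ + r for every H ⊆ 𝒢, and ∑_{H ⊆ 𝒢} f_H(e'_H) ≤ 2 · ∑_{H ⊆ 𝒢} f_H(opt_H). -/
open scoped BigOperators ENNReal

lemma take_sum_mono {L : List ℝ} (h : ∀ a ∈ L, 0 ≤ a) {k l : ℕ} (hkl : k ≤ l) :
    (L.take k).sum ≤ (L.take l).sum := by
  conv_rhs => rw [← List.take_append_drop k (L.take l)]
  rw [List.sum_append, List.take_take, min_eq_left hkl]
  have h0 : 0 ≤ ((L.take l).drop k).sum :=
    List.sum_nonneg fun a ha =>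
      h a (List.mem_of_mem_take (List.mem_of_mem_drop ha))
  linarith

lemma plExt_natCast (f : ℕ → ℝ) (n : ℕ) : plExt f (n : ℝ) = f n := by
  simp [plExt]

lemma plExt_floor_le {f : ℕ → ℝ} (hf : Monotone f) {x : ℝ} (hx : 0 ≤ x) :
    f ⌊x⌋₊ ≤ plExt f x := by
  have h1 : 0 ≤ x - (⌊x⌋₊ : ℝ) := sub_nonneg.2 (Nat.floor_le hx)
  have h2 : f ⌊x⌋₊ ≤ f (⌊x⌋₊ + 1) := hf (Nat.le_succ _)
  have := mul_nonneg (sub_nonneg.2 h2) h1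
  unfold plExt
  linarith


/-- Correctness and 2-approximation guarantee of the LP-rounding algorithm: rounding an
optimal fractional solution yields an integer-feasible vector `e'` with
`⌊x̂_H⌋ ≤ e'_H ≤ ⌊x̂_H⌋ + r` whose cost is at most twice the integer optimum. -/
theorem lp_rounding_two_approx {G D : Type*} [Fintype G] [DecidableEq G] [Fintype D]
    (sets : D → Finset G) (w : D → ℝ) (hw : ∀ t, 0 ≤ w t) (Q : G → ℕ)
    (opt : Finset G → ℕ) (hopt : IntFeasible sets Q opt)
    (hoptmin : ∀ y : Finset G → ℕ, IntFeasible sets Q y →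
      ∑ H : Finset G, fH sets w H (opt H) ≤ ∑ H : Finset G, fH sets w H (y H))
    (xhat : Finset G → ℝ) (hxhat : FracFeasible sets Q xhat)
    (hxhatmin : ∀ y : Finset G → ℝ, FracFeasible sets Q y →
      ∑ H : Finset G, plExt (fH sets w H) (xhat H) ≤
        ∑ H : Finset G, plExt (fH sets w H) (y H))
    (r : ℕ) (hr : r = ⌈∑ H : Finset G, (xhat H - (⌊xhat H⌋₊ : ℝ))⌉₊)
    (e' : Finset G → ℕ)
    (he' : ∀ H : Finset G, e' H = min (max ⌊xhat H⌋₊ (opt H)) (⌊xhat H⌋₊ + r)) :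
    IntFeasible sets Q e' ∧
    (∀ H : Finset G, ⌊xhat H⌋₊ ≤ e' H ∧ e' H ≤ ⌊xhat H⌋₊ + r) ∧
    ∑ H : Finset G, fH sets w H (e' H) ≤ 2 * ∑ H : Finset G, fH sets w H (opt H) := by
  obtain ⟨hoptub, hoptd⟩ := hopt
  obtain ⟨hxb, hxd⟩ := hxhat
  have hxnn : ∀ H, 0 ≤ xhat H := fun H => (hxb H).1
  have hbounds : ∀ H : Finset G, ⌊xhat H⌋₊ ≤ e' H ∧ e' H ≤ ⌊xhat H⌋₊ + r := by
    intro H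
    rw [he' H]
    omega
  have hmono : ∀ H, Monotone (fH sets w H) := fun H => fH_mono sets w hw H
  have hnn : ∀ H k, 0 ≤ fH sets w H k := fun H k => fH_nonneg sets w hw H k
  have hfeas : IntFeasible sets Q e' := by
    constructor
    · intro H
      have h1 : ⌊xhat H⌋₊ ≤ (bucket sets H).card := by
        have := Nat.floor_le_floor (R := ℝ) (hxb H).2
        simpa using this
      have h2 := hoptub H
      rw [he' H]
      omega
    · intro g
      set S := Finset.univ.filter (fun H : Finset G => g ∈ H) with hS
      by_cases hcase : ∃ H₀ ∈ S, ⌊xhat H₀⌋₊ + r < max ⌊xhat H₀⌋₊ (opt H₀)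
      · obtain ⟨H₀, hH₀mem, hH₀⟩ := hcase
        have he'H₀ : e' H₀ = ⌊xhat H₀⌋₊ + r := by rw [he' H₀]; omega
        have key : ∑ H ∈ S, ⌊xhat H⌋₊ + r ≤ ∑ H ∈ S, e' H := by
          rw [← Finset.add_sum_erase S e' hH₀mem, he'H₀,
              ← Finset.add_sum_erase S (fun H => ⌊xhat H⌋₊) hH₀mem]
          have hrest : ∑ H ∈ S.erase H₀, ⌊xhat H⌋₊ ≤ ∑ H ∈ S.erase H₀, e' H :=
            Finset.sum_le_sum fun H _ => (hbounds H).1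
          omega
        have hfr : ∑ H ∈ S, (xhat H - (⌊xhat H⌋₊ : ℝ)) ≤ (r : ℝ) := by
          calc ∑ H ∈ S, (xhat H - (⌊xhat H⌋₊ : ℝ))
              ≤ ∑ H : Finset G, (xhat H - (⌊xhat H⌋₊ : ℝ)) :=
                Finset.sum_le_sum_of_subset_of_nonneg (Finset.subset_univ S)
                  (fun H _ _ => sub_nonneg.2 (Nat.floor_le (hxnn H)))
            _ ≤ (r : ℝ) := by rw [hr]; exact Nat.le_ceil _
        have hreal : (Q g : ℝ) ≤ (((∑ H ∈ S, ⌊xhat H⌋₊) + r : ℕ) : ℝ) := by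
          have h1 : (Q g : ℝ) ≤ ∑ H ∈ S, xhat H := hxd g
          rw [Finset.sum_sub_distrib] at hfr
          push_cast
          linarith
        have hQ : Q g ≤ ∑ H ∈ S, ⌊xhat H⌋₊ + r := by exact_mod_cast hreal
        exact hQ.trans key
      · push_neg at hcase
        calc Q g ≤ ∑ H ∈ S, opt H := hoptd g
          _ ≤ ∑ H ∈ S, e' H := Finset.sum_le_sum fun H hH => by
              have := hcase H hH
              rw [he' H]
              omega
  refine ⟨hfeas, hbounds, ?_⟩
  have step1 : ∀ H : Finset G,
      fH sets w H (e' H) ≤ fH sets w H ⌊xhat H⌋₊ + fH sets w H (opt H) := by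
    intro H
    have hle : e' H ≤ max ⌊xhat H⌋₊ (opt H) := by rw [he' H]; omega
    refine le_trans (hmono H hle) ?_
    rcases max_cases ⌊xhat H⌋₊ (opt H) with ⟨heq, _⟩ | ⟨heq, _⟩ <;> rw [heq]
    · linarith [hnn H (opt H)]
    · linarith [hnn H ⌊xhat H⌋₊]
  have step2 : ∀ H : Finset G, fH sets w H ⌊xhat H⌋₊ ≤ plExt (fH sets w H) (xhat H) :=
    fun H => plExt_floor_le (hmono H) (hxnn H)
  have step3 : ∑ H : Finset G, plExt (fH sets w H) (xhat H) ≤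
      ∑ H : Finset G, fH sets w H (opt H) := by
    have hy : FracFeasible sets Q (fun H => (opt H : ℝ)) := by
      refine ⟨fun H => ⟨Nat.cast_nonneg _, Nat.cast_le.2 (hoptub H)⟩, fun g => ?_⟩
      have := hoptd g
      push_cast
      exact_mod_cast this
    have := hxhatmin _ hy
    simpa only [plExt_natCast] using this
  calc ∑ H : Finset G, fH sets w H (e' H)
      ≤ ∑ H : Finset G, (fH sets w H ⌊xhat H⌋₊ + fH sets w H (opt H)) :=
        Finset.sum_le_sum fun H _ => step1 H
    _ = ∑ H : Finset G, fH sets w H ⌊xhat H⌋₊ + ∑ H : Finset G, fH sets w H (opt H) :=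
        Finset.sum_add_distrib
    _ ≤ ∑ H : Finset G, plExt (fH sets w H) (xhat H) + ∑ H : Finset G, fH sets w H (opt H) :=
        add_le_add_left (Finset.sum_le_sum fun H _ => step2 H) _
    _ ≤ ∑ H : Finset G, fH sets w H (opt H) + ∑ H : Finset G, fH sets w H (opt H) :=
        add_le_add_left step3 _
    _ = 2 * ∑ H : Finset G, fH sets w H (opt H) := by ring
end

section
/- Let ε > 0 and let f : [α, β] → ℝ be continuous, convex, and nondecreasing with 0 < α ≤ β, f(α) = γ > 0 and f(β) = δ. Then there exist an integer s ≥ 2 and points α = x_1 ≤ x_2 ≤ … ≤ x_s = β with s − 1 ≤ ⌈ log(δ/γ) / log(1+ε) ⌉ + 1, such that the piecewise-linear function g : [α, β] → ℝ that agrees with f at each x_i and is affine on each interval [x_i, x_{i+1}] is continuous, convex, nondecreasing, and satisfies f(x) ≤ g(x) ≤ (1+ε) · f(x) for every x ∈ [α, β]. -/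
open scoped BigOperators

private lemma mul_convex_ineq {s : Set ℝ} {f : ℝ → ℝ} (hf : ConvexOn ℝ s f)
    {a b y : ℝ} (ha : a ∈ s) (hb : b ∈ s) (hay : a ≤ y) (hyb : y ≤ b) :
    (b - a) * f y ≤ (b - y) * f a + (y - a) * f b := by
  rcases eq_or_lt_of_le (hay.trans hyb) with h | h
  · have h1 : y = a := le_antisymm (h ▸ hyb) hay
    subst h1; rw [← h]; simp
  · have hba : (0:ℝ) < b - a := sub_pos.2 h
    set t := (b - y) / (b - a) with hhtt
    set u := (y - a) / (b - a) with hhuu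
    have ht : 0 ≤ t := div_nonneg (by linarith) hba.le
    have hu : 0 ≤ u := div_nonneg (by linarith) hba.le
    have htu : t + u = 1 := by rw [hhtt, hhuu, ← add_div, div_eq_one_iff_eq hba.ne']; ring
    have hy : t • a + u • b = y := by
      simp only [smul_eq_mul, hhtt, hhuu]; field_simp; ring
    have h2 := hf.2 ha hb ht hu htu
    rw [hy] at h2
    simp only [smul_eq_mul] at h2
    have h3 : (b - a) * f y ≤ (b - a) * (t * f a + u * f b) := by nlinarith
    calc (b - a) * f y ≤ (b - a) * (t * f a + u * f b) := h3
    _ = (b - y) * f a + (y - a) * f b := by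
        rw [hhtt, hhuu]; field_simp

private lemma affine_nonneg_aux {a b p q y : ℝ} (hpy : p ≤ y) (hyq : y ≤ q)
    (hp : 0 ≤ a * p + b) (hq : 0 ≤ a * q + b) : 0 ≤ a * y + b := by
  rcases eq_or_lt_of_le (hpy.trans hyq) with h | h
  · have h1 : y = p := le_antisymm (h ▸ hyq) hpy
    subst h1; exact hp
  · nlinarith [mul_nonneg (by linarith : (0:ℝ) ≤ q - y) hp,
      mul_nonneg (by linarith : (0:ℝ) ≤ y - p) hq]

private lemma convexOn_sup' {ι : Type*} {s : Finset ι} (hne : s.Nonempty)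
    (F : ι → ℝ → ℝ) (C : Set ℝ)
    (hF : ∀ i ∈ s, ConvexOn ℝ C (F i)) :
    ConvexOn ℝ C (fun y => s.sup' hne (fun i => F i y)) := by
  induction hne using Finset.Nonempty.cons_induction with
  | singleton a => simpa using hF a (by simp)
  | cons a t ha hne ih =>
    simp only [Finset.sup'_cons hne]
    have h1 : ConvexOn ℝ C (F a) := hF a (by simp)
    have h2 := ih (fun i hi => hF i (Finset.mem_cons_of_mem hi))
    exact h1.sup h2

private lemma monotoneOn_sup' {ι : Type*} {s : Finset ι} (hne : s.Nonempty)
    (F : ι → ℝ → ℝ) (C : Set ℝ)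
    (hF : ∀ i ∈ s, MonotoneOn (F i) C) :
    MonotoneOn (fun y => s.sup' hne (fun i => F i y)) C := by
  intro x hx y hy hxy
  apply Finset.sup'_le
  intro i hi
  exact le_trans (hF i hi hx hy hxy) (Finset.le_sup' (fun i => F i y) hi)

set_option maxHeartbeats 2000000 in
/-- A continuous, convex, nondecreasing function `f` on `[α, β]` with `0 < α ≤ β`,
`f α = γ > 0`, `f β = δ` can be interpolated at at most `⌈log(δ/γ)/log(1+ε)⌉ + 1` + 1 points
by a continuous, convex, nondecreasing piecewise-linear function `g` with
`f ≤ g ≤ (1+ε) f` on `[α, β]`. -/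
theorem pl_approx_exists (ε α β γ δ : ℝ) (hε : 0 < ε) (hα : 0 < α) (hαβ : α ≤ β)
    (f : ℝ → ℝ) (hcont : ContinuousOn f (Set.Icc α β))
    (hconv : ConvexOn ℝ (Set.Icc α β) f)
    (hmono : MonotoneOn f (Set.Icc α β))
    (hγ : f α = γ) (hγpos : 0 < γ) (hδ : f β = δ) :
    ∃ (s : ℕ) (x : ℕ → ℝ) (g : ℝ → ℝ),
      2 ≤ s ∧
      x 0 = α ∧ x (s - 1) = β ∧
      (∀ i j : ℕ, i ≤ j → j ≤ s - 1 → x i ≤ x j) ∧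
      ((s : ℤ) - 1 ≤ ⌈Real.log (δ / γ) / Real.log (1 + ε)⌉ + 1) ∧
      (∀ i ≤ s - 1, g (x i) = f (x i)) ∧
      (∀ i < s - 1, ∃ a b : ℝ, ∀ y ∈ Set.Icc (x i) (x (i + 1)), g y = a * y + b) ∧
      ContinuousOn g (Set.Icc α β) ∧
      ConvexOn ℝ (Set.Icc α β) g ∧
      MonotoneOn g (Set.Icc α β) ∧
      (∀ y ∈ Set.Icc α β, f y ≤ g y ∧ g y ≤ (1 + ε) * f y) := by
  classical
  have hαmem : α ∈ Set.Icc α β := ⟨le_rfl, hαβ⟩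
  have hβmem : β ∈ Set.Icc α β := ⟨hαβ, le_rfl⟩
  have hδγ : γ ≤ δ := by rw [← hγ, ← hδ]; exact hmono hαmem hβmem hαβ
  have hδpos : 0 < δ := lt_of_lt_of_le hγpos hδγ
  have hεpos : (0:ℝ) < 1 + ε := by linarith
  have hlog1ε : 0 < Real.log (1 + ε) := Real.log_pos (by linarith)
  set q := Real.log (δ / γ) / Real.log (1 + ε) with hqdef
  have hq0 : 0 ≤ q :=
    div_nonneg (Real.log_nonneg ((one_le_div hγpos).2 hδγ)) hlog1ε.le
  have hceil0 : 0 ≤ ⌈q⌉ := Int.ceil_nonneg hq0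
  rcases eq_or_lt_of_le hαβ with hab | hab
  · -- degenerate case α = β
    have hγδ : γ = δ := by rw [← hγ, ← hδ, hab]
    refine ⟨2, fun _ => α, fun _ => δ, le_rfl, rfl, hab, fun _ _ _ _ => le_rfl, ?_, ?_, ?_,
      continuousOn_const, convexOn_const _ (convex_Icc _ _), monotoneOn_const, ?_⟩
    · push_cast
      linarith [hceil0]
    · intro i _
      show δ = f α
      rw [hγ, hγδ]
    · intro i _
      exact ⟨0, δ, fun y _ => by ring⟩
    · intro y hy
      have hyα : y = α := le_antisymm (hab ▸ hy.2) hy.1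
      subst hyα
      refine ⟨?_, ?_⟩
      · show f y ≤ δ
        rw [hγ, hγδ]
      · show δ ≤ (1 + ε) * f y
        rw [hγ, ← hγδ]
        nlinarith
  · -- main case α < β
    set n := max 1 (⌈q⌉.toNat) with hndef
    have hn1 : 1 ≤ n := le_max_left _ _
    -- levels
    set lev : ℕ → ℝ := fun i => γ * (1 + ε) ^ i with hlevdef
    have hlevpos : ∀ i, 0 < lev i := fun i => mul_pos hγpos (pow_pos hεpos i)
    have hlev0 : lev 0 = γ := by simp [hlevdef]
    have hlevsucc : ∀ i, lev (i + 1) = (1 + ε) * lev i := by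
      intro i; simp only [hlevdef, pow_succ]; ring
    have hlevmono : ∀ i j, i ≤ j → lev i ≤ lev j := by
      intro i j hij
      exact mul_le_mul_of_nonneg_left (pow_le_pow_right₀ (by linarith) hij) hγpos.le
    have hlevn : δ ≤ lev n := by
      have hcast : ((⌈q⌉.toNat : ℤ) : ℝ) = (⌈q⌉ : ℝ) := by
        rw [Int.toNat_of_nonneg hceil0]
      have h1 : q ≤ (n : ℝ) := by
        have h2 : (⌈q⌉.toNat : ℕ) ≤ n := le_max_right _ _
        have h3 : ((⌈q⌉.toNat : ℕ) : ℝ) ≤ (n : ℝ) := by exact_mod_cast h2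
        have h4 : (⌈q⌉ : ℝ) ≤ (n : ℝ) := by
          rw [← hcast] at *; push_cast at h3 ⊢; linarith
        linarith [Int.le_ceil q]
      have h5 : Real.log (δ / γ) ≤ (n : ℝ) * Real.log (1 + ε) := by
        rw [hqdef, div_le_iff₀ hlog1ε] at h1; linarith
      have h6 : Real.log (δ / γ) ≤ Real.log ((1 + ε) ^ n) := by
        rw [Real.log_pow]; exact h5
      have h7 : δ / γ ≤ (1 + ε) ^ n :=
        (Real.log_le_log_iff (div_pos hδpos hγpos) (pow_pos hεpos n)).1 h6
      rw [hlevdef]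
      calc δ = γ * (δ / γ) := by field_simp
      _ ≤ γ * (1 + ε) ^ n := mul_le_mul_of_nonneg_left h7 hγpos.le
    -- the sets
    set S : ℕ → Set ℝ := fun i => {z | z ∈ Set.Icc α β ∧ f z ≤ lev i} with hSdef
    have hSsub : ∀ i, S i ⊆ Set.Icc α β := fun i z hz => hz.1
    have hSne : ∀ i, α ∈ S i := by
      intro i
      refine ⟨hαmem, ?_⟩
      rw [hγ, ← hlev0]
      exact hlevmono 0 i (Nat.zero_le i)
    have hSbdd : ∀ i, BddAbove (S i) := fun i => ⟨β, fun z hz => hz.1.2⟩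
    have hScomp : ∀ i, IsCompact (S i) := by
      intro i
      have hcl : IsClosed (S i) := by
        have : S i = Set.Icc α β ∩ f ⁻¹' Set.Iic (lev i) := by
          ext z; simp [hSdef, Set.mem_Icc, and_comm]
        rw [this]
        exact hcont.preimage_isClosed_of_isClosed isClosed_Icc isClosed_Iic
      exact isCompact_Icc.of_isClosed_subset hcl (hSsub i)
    -- the points
    set xp : ℕ → ℝ := fun i => if i = 0 then α else sSup (S i) with hxpdef
    have hx0 : xp 0 = α := by simp [hxpdef]
    have hxsup : ∀ i, 1 ≤ i → xp i = sSup (S i) := by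
      intro i hi; simp [hxpdef, Nat.one_le_iff_ne_zero.1 hi]
    have hxmem : ∀ i, xp i ∈ S i := by
      intro i
      rcases Nat.eq_zero_or_pos i with h | h
      · subst h; rw [hx0]; exact hSne 0
      · rw [hxsup i h]
        exact (hScomp i).sSup_mem ⟨α, hSne i⟩
    have hxIcc : ∀ i, xp i ∈ Set.Icc α β := fun i => (hxmem i).1
    have hfxle : ∀ i, f (xp i) ≤ lev i := fun i => (hxmem i).2
    have hxmono : Monotone xp := by
      apply monotone_nat_of_le_succ
      intro i
      rcases Nat.eq_zero_or_pos i with h | h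
      · subst h; rw [hx0]; exact (hxIcc 1).1
      · rw [hxsup i h, hxsup (i+1) (by omega)]
        exact csSup_le_csSup (hSbdd (i+1)) ⟨α, hSne i⟩
          (fun z hz => ⟨hz.1, hz.2.trans (hlevmono i (i+1) (by omega))⟩)
    have hub : ∀ i, 1 ≤ i → ∀ z ∈ S i, z ≤ xp i := by
      intro i hi z hz
      rw [hxsup i hi]
      exact le_csSup (hSbdd i) hz
    have hxlt : ∀ i, xp i < β → lev i ≤ f (xp i) := by
      intro i hiβ
      rcases Nat.eq_zero_or_pos i with h | h
      · subst h; rw [hx0, hγ, hlev0]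
      · by_contra hlt
        push_neg at hlt
        have hcw : ContinuousWithinAt f (Set.Icc α β) (xp i) := hcont _ (hxIcc i)
        have hev : f ⁻¹' Set.Iio (lev i) ∈ nhdsWithin (xp i) (Set.Icc α β) :=
          hcw (Iio_mem_nhds hlt)
        have hsub : Set.Ioc (xp i) β ⊆ Set.Icc α β :=
          fun z hz => ⟨le_trans (hxIcc i).1 hz.1.le, hz.2⟩
        have hle : nhdsWithin (xp i) (Set.Ioc (xp i) β) ≤ nhdsWithin (xp i) (Set.Icc α β) :=
          nhdsWithin_mono _ hsub
        have hnb : (nhdsWithin (xp i) (Set.Ioc (xp i) β)).NeBot :=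
          left_nhdsWithin_Ioc_neBot hiβ
        have hev2 : ∀ᶠ z in nhdsWithin (xp i) (Set.Ioc (xp i) β),
            f z < lev i ∧ z ∈ Set.Ioc (xp i) β :=
          Filter.Eventually.and (hle hev) self_mem_nhdsWithin
        obtain ⟨z, hz1, hz2⟩ := hev2.exists
        have hzS : z ∈ S i := ⟨hsub hz2, hz1.le⟩
        have := hub i h z hzS
        exact absurd this (not_le.2 hz2.1)
    have hxn : xp n = β := by
      have hβS : β ∈ S n := ⟨hβmem, by rw [hδ]; exact hlevn⟩
      rw [hxsup n hn1]
      exact le_antisymm (csSup_le ⟨α, hSne n⟩ fun z hz => hz.1.2) (le_csSup (hSbdd n) hβS)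
    have hstrict : ∀ i, xp i < β → xp i < xp (i + 1) := by
      intro i hiβ
      rcases lt_or_ge (xp i) (xp (i+1)) with h | h
      · exact h
      · exfalso
        have heq : xp (i+1) = xp i := le_antisymm h (hxmono (Nat.le_succ i))
        have h1 : lev (i+1) ≤ f (xp (i+1)) := by
          apply hxlt; rw [heq]; exact hiβ
        rw [heq] at h1
        have h2 : f (xp i) ≤ lev i := hfxle i
        have h3 : lev i < lev (i+1) := by
          rw [hlevsucc i]; nlinarith [hlevpos i]
        linarith
    have heqβ : ∀ i, ¬ xp i < xp (i + 1) → xp i = β := by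
      intro i h
      by_contra hne
      exact h (hstrict i (lt_of_le_of_ne (hxIcc i).2 hne))
    -- slopes and chord lines
    set m : ℕ → ℝ := fun k => (f (xp (k+1)) - f (xp k)) / (xp (k+1) - xp k) with hmdef
    set K : ℕ → ℕ := fun i => if xp i < xp (i+1) then i else 0 with hKdef
    have hKi : ∀ i, xp i < xp (i+1) → K i = i := by
      intro i h; simp [hKdef, h]
    have hK : ∀ i, xp (K i) < xp (K i + 1) := by
      intro i
      by_cases h : xp i < xp (i+1)
      · rw [hKi i h]; exact h
      · have : K i = 0 := by simp [hKdef, h]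
        rw [this]
        apply hstrict 0
        rw [hx0]; exact hab
    set L : ℕ → ℝ → ℝ := fun j y => f (xp (K j)) + m (K j) * (y - xp (K j)) with hLdef
    -- chord facts
    have hmd : ∀ k, xp k < xp (k+1) → m k * (xp (k+1) - xp k) = f (xp (k+1)) - f (xp k) := by
      intro k hk
      rw [hmdef]
      exact div_mul_cancel₀ _ (sub_pos.2 hk).ne'
    have hm0 : ∀ k, xp k < xp (k+1) → 0 ≤ m k := by
      intro k hk
      apply div_nonneg _ (sub_pos.2 hk).le
      have := hmono (hxIcc k) (hxIcc (k+1)) (hxmono (Nat.le_succ k))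
      linarith
    have hcR : ∀ k, xp k < xp (k+1) →
        f (xp k) + m k * (xp (k+1) - xp k) = f (xp (k+1)) := by
      intro k hk; rw [hmd k hk]; ring
    have hin : ∀ k, xp k < xp (k+1) → ∀ y, xp k ≤ y → y ≤ xp (k+1) →
        f y ≤ f (xp k) + m k * (y - xp k) := by
      intro k hk y hy1 hy2
      have hd : 0 < xp (k+1) - xp k := sub_pos.2 hk
      have key := mul_convex_ineq hconv (hxIcc k) (hxIcc (k+1)) hy1 hy2
      have h3 : (xp (k+1) - xp k) * (m k * (y - xp k))
          = (y - xp k) * (f (xp (k+1)) - f (xp k)) := by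
        rw [← hmd k hk]; ring
      have h2 : (xp (k+1) - xp k) * f y
          ≤ (xp (k+1) - xp k) * (f (xp k) + m k * (y - xp k)) := by nlinarith
      exact le_of_mul_le_mul_left h2 hd
    have hout : ∀ k, xp k < xp (k+1) → ∀ c, c ∈ Set.Icc α β →
        (c ≤ xp k ∨ xp (k+1) ≤ c) → f (xp k) + m k * (c - xp k) ≤ f c := by
      intro k hk c hc hcase
      have hd : 0 < xp (k+1) - xp k := sub_pos.2 hk
      have h3 : (xp (k+1) - xp k) * (m k * (c - xp k))
          = (c - xp k) * (f (xp (k+1)) - f (xp k)) := by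
        rw [← hmd k hk]; ring
      rcases hcase with h | h
      · have key := mul_convex_ineq hconv hc (hxIcc (k+1)) h (hxmono (Nat.le_succ k))
        have h2 : (xp (k+1) - xp k) * (f (xp k) + m k * (c - xp k))
            ≤ (xp (k+1) - xp k) * f c := by nlinarith
        exact le_of_mul_le_mul_left h2 hd
      · have key := mul_convex_ineq hconv (hxIcc k) hc (hxmono (Nat.le_succ k)) h
        have h2 : (xp (k+1) - xp k) * (f (xp k) + m k * (c - xp k))
            ≤ (xp (k+1) - xp k) * f c := by nlinarith
        exact le_of_mul_le_mul_left h2 hd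
    -- L facts
    have hLout : ∀ j, ∀ c ∈ Set.Icc α β, (c ≤ xp (K j) ∨ xp (K j + 1) ≤ c) → L j c ≤ f c := by
      intro j c hc hcase
      exact hout (K j) (hK j) c hc hcase
    have hLatx : ∀ j i, L j (xp i) ≤ f (xp i) := by
      intro j i
      apply hLout j (xp i) (hxIcc i)
      rcases le_or_gt i (K j) with h | h
      · exact Or.inl (hxmono h)
      · exact Or.inr (hxmono h)
    have hLaff : ∀ j z, L j z = m (K j) * z + (f (xp (K j)) - m (K j) * xp (K j)) := by
      intro j z; rw [hLdef]; ring
    -- the function g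
    have hne : (Finset.range n).Nonempty := ⟨0, Finset.mem_range.2 hn1⟩
    set g : ℝ → ℝ := fun y => (Finset.range n).sup' hne (fun i => L i y) with hgdef
    have hgle : ∀ z ∈ Set.Icc α β, g z ≤ f z → True := fun _ _ _ => trivial
    have hpiece : ∀ i, i < n → xp i < xp (i+1) → ∀ y, xp i ≤ y → y ≤ xp (i+1) →
        g y = f (xp i) + m i * (y - xp i) := by
      intro i hi hxi y hy1 hy2
      apply le_antisymm
      · apply Finset.sup'_le
        intro j _
        have e : ∀ z, (f (xp i) + m i * (z - xp i)) - L j z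
            = (m i - m (K j)) * z
              + ((f (xp i) - m i * xp i) - (f (xp (K j)) - m (K j) * xp (K j))) := by
          intro z; rw [hLdef]; ring
        have hp : 0 ≤ (m i - m (K j)) * xp i
            + ((f (xp i) - m i * xp i) - (f (xp (K j)) - m (K j) * xp (K j))) := by
          rw [← e]
          have := hLatx j i
          have hLi : f (xp i) + m i * (xp i - xp i) = f (xp i) := by ring
          linarith [hLatx j i]
        have hq2 : 0 ≤ (m i - m (K j)) * xp (i+1)
            + ((f (xp i) - m i * xp i) - (f (xp (K j)) - m (K j) * xp (K j))) := by
          rw [← e]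
          have h1 := hLatx j (i+1)
          have h2 := hcR i hxi
          linarith
        have := affine_nonneg_aux hy1 hy2 hp hq2
        rw [← e] at this
        linarith
      · have hLi : L i y = f (xp i) + m i * (y - xp i) := by
          rw [hLdef]; simp only []
          rw [hKi i hxi]
        rw [← hLi]
        exact Finset.le_sup' (fun j => L j y) (Finset.mem_range.2 hi)
    have hgx : ∀ i, i ≤ n → g (xp i) = f (xp i) := by
      intro i hi
      apply le_antisymm
      · exact Finset.sup'_le _ _ (fun j _ => hLatx j i)
      · rcases lt_or_eq_of_le (hxIcc i).2 with hiβ | hiβ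
        · have hilt : i < n := by
            by_contra hge
            push_neg at hge
            have := hxmono hge
            rw [hxn] at this
            exact absurd (lt_of_le_of_lt this hiβ) (lt_irrefl _)
          have hxi := hstrict i hiβ
          have hLi : L i (xp i) = f (xp i) := by
            rw [hLdef]; simp only []
            rw [hKi i hxi]; ring
          rw [← hLi]
          exact Finset.le_sup' (fun j => L j (xp i)) (Finset.mem_range.2 hilt)
        · -- xp i = β
          set k := Nat.findGreatest (fun j => xp j < β) (n - 1) with hkdef
          have hk1 : xp k < β := by
            have := Nat.findGreatest_spec (P := fun j => xp j < β) (m := 0) (n := n - 1) (Nat.zero_le _)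
              (show xp 0 < β by rw [hx0]; exact hab)
            rw [← hkdef] at this
            exact this
          have hkle : k ≤ n - 1 := Nat.findGreatest_le _
          have hk2 : xp (k + 1) = β := by
            rcases lt_or_ge k (n - 1) with h | h
            · have hng := Nat.findGreatest_is_greatest (P := fun j => xp j < β)
                (n := n - 1) (Nat.lt_succ_self k) (by omega)
              exact le_antisymm (hxIcc _).2 (not_lt.1 hng)
            · have : k = n - 1 := le_antisymm hkle h
              have : k + 1 = n := by omega
              rw [this, hxn]
          have hkn : k < n := by omega
          have hkk : xp k < xp (k+1) := by rw [hk2]; exact hk1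
          have hLk : L k (xp i) = f (xp i) := by
            rw [hLdef]; simp only []
            rw [hKi k hkk, hiβ, ← hk2]
            exact hcR k hkk
          rw [← hLk]
          exact Finset.le_sup' (fun j => L j (xp i)) (Finset.mem_range.2 hkn)
    -- analytic properties of g
    have hLfun : ∀ j, L j = fun z => m (K j) * z + (f (xp (K j)) - m (K j) * xp (K j)) :=
      fun j => funext (hLaff j)
    have hLcont : ∀ j, Continuous (L j) := by
      intro j
      rw [hLfun j]
      exact (continuous_const.mul continuous_id).add continuous_const
    have hLconv : ∀ j, ConvexOn ℝ (Set.Icc α β) (L j) := by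
      intro j
      rw [hLfun j]
      refine ⟨convex_Icc _ _, ?_⟩
      intro p _ r _ a b ha hb hab2
      apply le_of_eq
      simp only [smul_eq_mul]
      linear_combination (f (xp (K j)) - m (K j) * xp (K j)) * hab2.symm
    have hLmono : ∀ j, MonotoneOn (L j) (Set.Icc α β) := by
      intro j p _ r _ hpr
      rw [hLaff j p, hLaff j r]
      have hm := hm0 (K j) (hK j)
      nlinarith [mul_le_mul_of_nonneg_left hpr hm]
    have hgcont : ContinuousOn g (Set.Icc α β) := by
      rw [hgdef]
      exact (Continuous.finset_sup'_apply hne fun i _ => hLcont i).continuousOn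
    have hgconv : ConvexOn ℝ (Set.Icc α β) g := by
      rw [hgdef]
      exact convexOn_sup' hne L _ (fun i _ => hLconv i)
    have hgmono : MonotoneOn g (Set.Icc α β) := by
      rw [hgdef]
      exact monotoneOn_sup' hne L _ (fun i _ => hLmono i)
    -- main inequality
    have hmain : ∀ y ∈ Set.Icc α β, f y ≤ g y ∧ g y ≤ (1 + ε) * f y := by
      intro y hy
      set i := Nat.findGreatest (fun j => xp j ≤ y) (n - 1) with hidef
      have hxi_le : xp i ≤ y := by
        have := Nat.findGreatest_spec (P := fun j => xp j ≤ y) (m := 0) (n := n - 1)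
          (Nat.zero_le _) (show xp 0 ≤ y by rw [hx0]; exact hy.1)
        rw [← hidef] at this
        exact this
      have hile : i ≤ n - 1 := Nat.findGreatest_le _
      have hiltn : i < n := by omega
      have hy_le : y ≤ xp (i + 1) := by
        rcases lt_or_ge i (n - 1) with h | h
        · have hng := Nat.findGreatest_is_greatest (P := fun j => xp j ≤ y)
            (n := n - 1) (Nat.lt_succ_self i) (by omega)
          exact (not_le.1 hng).le
        · have : i + 1 = n := by omega
          rw [this, hxn]
          exact hy.2
      by_cases hxi : xp i < xp (i + 1)
      · have hgy := hpiece i hiltn hxi y hxi_le hy_le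
        constructor
        · rw [hgy]
          exact hin i hxi y hxi_le hy_le
        · have hub1 : f (xp i) + m i * (y - xp i) ≤ f (xp (i+1)) := by
            have h1 := mul_le_mul_of_nonneg_left (sub_le_sub_right hy_le (xp i)) (hm0 i hxi)
            have h2 := hcR i hxi
            linarith
          have hxiβ : xp i < β := lt_of_lt_of_le hxi (hxIcc (i+1)).2
          have h3 : lev i ≤ f (xp i) := hxlt i hxiβ
          have h4 : f (xp (i+1)) ≤ lev (i+1) := hfxle (i+1)
          have h5 : lev (i+1) = (1 + ε) * lev i := hlevsucc i
          have h6 : f (xp i) ≤ f y := hmono (hxIcc i) hy hxi_le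
          rw [hgy]
          have h7 : (1 + ε) * lev i ≤ (1 + ε) * f (xp i) :=
            mul_le_mul_of_nonneg_left h3 hεpos.le
          have h8 : (1 + ε) * f (xp i) ≤ (1 + ε) * f y :=
            mul_le_mul_of_nonneg_left h6 hεpos.le
          linarith
      · have hiβ : xp i = β := heqβ i hxi
        have hyβ : y = β := le_antisymm hy.2 (hiβ ▸ hxi_le)
        have hgβ : g β = f β := by
          have := hgx i (by omega)
          rw [hiβ] at this
          exact this
        subst hyβ
        rw [hgβ, hδ]
        exact ⟨le_rfl, by nlinarith⟩
    -- packaging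
    refine ⟨n + 1, xp, g, by omega, hx0, by simpa using hxn, ?_, ?_, ?_, ?_, hgcont, hgconv, hgmono, hmain⟩
    · intro i j hij _
      exact hxmono hij
    · push_cast
      have h2 : (n : ℤ) = max 1 (⌈q⌉.toNat : ℤ) := by
        rw [hndef]; push_cast; rfl
      rw [Int.toNat_of_nonneg hceil0] at h2
      rcases max_cases (1 : ℤ) ⌈q⌉ with ⟨h3, h4⟩ | ⟨h3, h4⟩ <;> rw [h3] at h2 <;> omega
    · intro i hi
      exact hgx i (by simpa using hi)
    · intro i hi
      simp only [Nat.add_sub_cancel] at hi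
      by_cases hxi : xp i < xp (i + 1)
      · refine ⟨m i, f (xp i) - m i * xp i, fun y hy => ?_⟩
        rw [hpiece i hi hxi y hy.1 hy.2]; ring
      · have hiβ : xp i = β := heqβ i hxi
        have hii : xp (i+1) = xp i :=
          le_antisymm (not_lt.1 hxi) (hxmono (Nat.le_succ i))
        refine ⟨0, g (xp i), fun y hy => ?_⟩
        have : y = xp i := le_antisymm (hii ▸ hy.2) hy.1
        rw [this]; ring
end
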